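/- Fix integers k ≥ 0 and n ≥ k+4, and let E be the set of 2-element subsets of [n]. The number of orbits of the diagonal action of S_{n−k} on E × E (where σ·(e,f) = (σ·e, σ·f)) equals 3 + 4k + 2k² + C(k,2)·(C(k,2) + 2k + 2), and this number equals (C(k,2)+k+1)² + (k+1)² + 1². -/

import Mathlib

open Finset

/-- The 2-element subsets ("edges") of `[n] = {1,…,n}`, modeled inside `ℕ`. -/
def edgesN (n : ℕ) : Finset (Finset ℕ) := (Finset.Icc 1 n).powersetCard 2

/-- `σ` belongs to the subgroup `S_{n-k} ≤ S_n` (inside `Perm ℕ`): it fixes every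
element of `[k]` pointwise and every element outside `[n]`. -/
def FixPerm (n k : ℕ) (σ : Equiv.Perm ℕ) : Prop :=
  (∀ i ∈ Finset.Icc 1 k, σ i = i) ∧ (∀ i, i ∉ Finset.Icc 1 n → σ i = i)

/-- The action of a permutation of `[n]` on an edge (2-subset) of `[n]`. -/
def permEdge (n : ℕ) (σ : Equiv.Perm ℕ) (g : ↥(edgesN n)) : ↥(edgesN n) :=
  if h : g.1.image σ ∈ edgesN n then ⟨g.1.image σ, h⟩ else g

/-- The orbit of a pair of edges under the diagonal action of `S_{n-k}` on `E × E`. -/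
def pairOrbit (n k : ℕ) (p : ↥(edgesN n) × ↥(edgesN n)) :
    Set (↥(edgesN n) × ↥(edgesN n)) :=
  {q | ∃ σ : Equiv.Perm ℕ, FixPerm n k σ ∧ q = (permEdge n σ p.1, permEdge n σ p.2)}

/-!
The orbit of a pair of edges `(e, f)` under `S_{n-k}` is determined by `e ∩ [k]`, `f ∩ [k]` and
the number `t` of common vertices of `e` and `f` outside `[k]`: these fix the sizes of the four
Venn cells of `e` and `f` in `[n] \ [k]`, and a permutation of `[n] \ [k]` carries any cells onto
any cells of the same sizes. When `n ≥ k + 4` there is room in `[n] \ [k]` to realise every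
triple `(A, B, t)` with `A, B ⊆ [k]`, `|A| + t ≤ 2` and `|B| + t ≤ 2`; counting these by
`t = 0, 1, 2` gives `(C(k,2) + k + 1)² + (k + 1)² + 1²`.
-/

open Equiv MulAction

theorem Nat.card_range_eq_of_forall_eq_iff {X Y Z : Type*} {f : X → Y} {g : X → Z}
    (h : ∀ a b, f a = f b ↔ g a = g b) : Nat.card (Set.range f) = Nat.card (Set.range g) := by
  have hker : Setoid.ker f = Setoid.ker g := Setoid.ext h
  rw [← Nat.card_congr (Setoid.quotientKerEquivRange f),
    ← Nat.card_congr (Setoid.quotientKerEquivRange g), hker]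

theorem Equiv.Perm.apply_iff_of_forall_not_imp_eq {α : Type*} {σ : Perm α} {p : α → Prop}
    (h : ∀ x, ¬p x → σ x = x) {x : α} : p (σ x) ↔ p x := by
  by_cases hx : p x
  · refine iff_of_true ?_ hx
    by_contra hσx
    exact hσx (by rwa [σ.injective (h _ hσx)])
  · rw [h x hx]

namespace Finset
variable {α : Type*}

theorem card_filter_and_add_card_filter_and_not (M : Finset α) (p q : α → Prop)
    [DecidablePred p] [DecidablePred q] :
    #{x ∈ M | p x ∧ q x} + #{x ∈ M | p x ∧ ¬q x} = #{x ∈ M | p x} := by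
  rw [← filter_filter, ← filter_filter, card_filter_add_card_filter_not]

theorem card_filter_powerset_card_le (s : Finset α) (m : ℕ) :
    #{A ∈ s.powerset | #A ≤ m} = ∑ j ∈ range (m + 1), (#s).choose j := by
  rw [card_eq_sum_card_fiberwise (f := card) (t := range (m + 1))
    fun A hA => mem_range.2 (Nat.lt_succ_of_le (mem_filter.1 hA).2)]
  refine sum_congr rfl fun j hj => ?_
  rw [← card_powersetCard, powersetCard_eq_filter, filter_filter]
  congr 1
  exact filter_congr fun A _ => ⟨And.right, fun h => ⟨h ▸ Nat.le_of_lt_succ (mem_range.1 hj), h⟩⟩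

theorem exists_perm_comp_eq_of_card_filter_eq {β : Type*} [DecidableEq β] {M : Finset α}
    {P P' : α → β} (h : ∀ b, #{x ∈ M | P x = b} = #{x ∈ M | P' x = b}) :
    ∃ σ : Perm α, (∀ x ∉ M, σ x = x) ∧ ∀ x ∈ M, P' (σ x) = P x := by
  have hfiber (b : β) : Fintype.card {x : M // P x = b} = Fintype.card {x : M // P' x = b} := by
    rw [Fintype.card_subtype, Fintype.card_subtype, univ_eq_attach, filter_attach (P · = b),
      filter_attach (P' · = b), card_map, card_map, card_attach, card_attach]
    convert h b
  classical
  let τ : Perm M := ofFiberEquiv fun b => Fintype.equivOfCardEq (hfiber b)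
  refine ⟨Perm.ofSubtype τ, fun x hx => Perm.ofSubtype_apply_of_not_mem τ hx, fun x hx => ?_⟩
  rw [Perm.ofSubtype_apply_of_mem τ hx]
  exact ofFiberEquiv_map (f := fun y : M => P y) (g := fun y : M => P' y) _ ⟨x, hx⟩

variable [DecidableEq α]

theorem image_perm_eq_of_forall_mem_iff {σ : Perm α} {s t : Finset α}
    (h : ∀ x, σ x ∈ t ↔ x ∈ s) : s.image σ = t := by
  ext y
  obtain ⟨x, rfl⟩ := σ.surjective y
  rw [σ.injective.mem_finset_image, h]

theorem image_perm_inter_of_forall_mem {σ : Perm α} {K : Finset α} (hK : ∀ x ∈ K, σ x = x)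
    (s : Finset α) : s.image σ ∩ K = s ∩ K := by
  ext x
  by_cases hx : x ∈ K
  · have hmem : x ∈ s.image σ ↔ x ∈ s := by
      conv_lhs => rw [← hK x hx]
      exact σ.injective.mem_finset_image
    simp [hmem]
  · simp [hx]

theorem image_perm_sdiff_of_forall_mem {σ : Perm α} {K : Finset α} (hK : ∀ x ∈ K, σ x = x)
    (s : Finset α) : s.image σ \ K = (s \ K).image σ := by
  rw [image_sdiff _ _ σ.injective, image_congr hK, image_id']

theorem inter_sdiff_distrib (s t u : Finset α) : (s ∩ t) \ u = (s \ u) ∩ (t \ u) :=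
  inf_sdiff

theorem union_inter_of_subset_of_disjoint {A I K : Finset α} (hA : A ⊆ K) (hI : Disjoint I K) :
    (A ∪ I) ∩ K = A := by
  rw [union_inter_distrib_right, inter_eq_left.2 hA, disjoint_iff_inter_eq_empty.1 hI,
    union_empty]

theorem union_sdiff_of_subset_of_disjoint {A I K : Finset α} (hA : A ⊆ K) (hI : Disjoint I K) :
    (A ∪ I) \ K = I := by
  rw [union_sdiff_distrib, sdiff_eq_empty_iff_subset.2 hA, hI.sdiff_eq_left, empty_union]

theorem sdiff_inter_of_subset {N K s : Finset α} (hs : s ⊆ N) : (N \ K) ∩ s = s \ K := by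
  ext x
  simp only [mem_inter, mem_sdiff]
  exact ⟨fun h => ⟨h.2, h.1.2⟩, fun h => ⟨⟨hs h.1, h.2⟩, h.1⟩⟩

theorem mem_iff_mem_of_inter_eq_of_notMem_sdiff {N K s t : Finset α} (hs : s ⊆ N) (ht : t ⊆ N)
    (hst : s ∩ K = t ∩ K) {x : α} (hx : x ∉ N \ K) : x ∈ s ↔ x ∈ t := by
  by_cases hxK : x ∈ K
  · simpa [hxK] using congrArg (x ∈ ·) hst
  · have hxN : x ∉ N := fun h => hx (mem_sdiff.2 ⟨h, hxK⟩)
    exact iff_of_false (fun h => hxN (hs h)) (fun h => hxN (ht h))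

theorem card_filter_venn (M s t : Finset α) :
    #{x ∈ M | x ∈ s ∧ x ∈ t} = #(M ∩ (s ∩ t)) ∧
    #{x ∈ M | x ∈ s ∧ x ∈ t} + #{x ∈ M | x ∈ s ∧ x ∉ t} = #(M ∩ s) ∧
    #{x ∈ M | x ∈ s ∧ x ∈ t} + #{x ∈ M | x ∉ s ∧ x ∈ t} = #(M ∩ t) ∧
    #(M ∩ s) + #{x ∈ M | x ∉ s ∧ x ∈ t} + #{x ∈ M | x ∉ s ∧ x ∉ t} = #M := by
  refine ⟨by rw [← filter_mem_eq_inter]; simp, ?_, ?_, ?_⟩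
  · rw [card_filter_and_add_card_filter_and_not, filter_mem_eq_inter]
  · rw [← filter_mem_eq_inter, ← card_filter_and_add_card_filter_and_not M (· ∈ t) (· ∈ s)]
    simp only [and_comm]
  · rw [add_assoc, card_filter_and_add_card_filter_and_not, ← filter_mem_eq_inter,
      card_filter_add_card_filter_not]

theorem card_filter_mem_pair_eq {M s t s' t' : Finset α} (hs : #(M ∩ s) = #(M ∩ s'))
    (ht : #(M ∩ t) = #(M ∩ t')) (hst : #(M ∩ (s ∩ t)) = #(M ∩ (s' ∩ t'))) (v : Bool × Bool) :
    #{x ∈ M | (decide (x ∈ s), decide (x ∈ t)) = v} =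
      #{x ∈ M | (decide (x ∈ s'), decide (x ∈ t')) = v} := by
  obtain ⟨b, c⟩ := v
  have hv (s t : Finset α) : #{x ∈ M | (decide (x ∈ s), decide (x ∈ t)) = (b, c)} =
      #{x ∈ M | (x ∈ s ↔ b = true) ∧ (x ∈ t ↔ c = true)} := by
    congr 1; ext x; cases b <;> cases c <;> simp
  obtain ⟨h1, h2, h3, h4⟩ := card_filter_venn M s t
  obtain ⟨h1', h2', h3', h4'⟩ := card_filter_venn M s' t'
  rw [hv, hv]
  cases b <;> cases c <;> simp only [Bool.false_eq_true, iff_false, iff_true] <;> omega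

end Finset

theorem mem_edgesN {n : ℕ} {e : Finset ℕ} : e ∈ edgesN n ↔ e ⊆ Icc 1 n ∧ #e = 2 :=
  mem_powersetCard

def symmetricSubgroup (n : ℕ) : Subgroup (Perm ℕ) := fixingSubgroup (Perm ℕ) (↑(Icc 1 n) : Set ℕ)ᶜ

theorem mem_symmetricSubgroup_iff {n : ℕ} {σ : Perm ℕ} :
    σ ∈ symmetricSubgroup n ↔ ∀ x ∉ Icc 1 n, σ x = x := by
  simp [symmetricSubgroup, mem_fixingSubgroup_iff, Perm.smul_def]

namespace symmetricSubgroup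
variable {n : ℕ}

theorem image_mem_edgesN (σ : symmetricSubgroup n) {e : Finset ℕ} (he : e ∈ edgesN n) :
    e.image σ ∈ edgesN n := by
  rw [mem_edgesN] at he ⊢
  refine ⟨fun x hx => ?_, by rw [card_image_of_injective _ (σ : Perm ℕ).injective, he.2]⟩
  obtain ⟨y, hy, rfl⟩ := mem_image.1 hx
  exact (Perm.apply_iff_of_forall_not_imp_eq (mem_symmetricSubgroup_iff.1 σ.2)).2 (he.1 hy)

theorem coe_permEdge (σ : symmetricSubgroup n) (e : edgesN n) :
    (permEdge n σ e : Finset ℕ) = e.1.image σ := by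
  rw [permEdge, dif_pos (image_mem_edgesN σ e.2)]

instance : MulAction (symmetricSubgroup n) (edgesN n) where
  smul σ e := permEdge n σ e
  one_smul e := Subtype.ext <| by
    change (permEdge n ↑(1 : symmetricSubgroup n) e : Finset ℕ) = e
    rw [coe_permEdge]
    exact image_id
  mul_smul σ τ e := Subtype.ext <| by
    change (permEdge n ↑(σ * τ) e : Finset ℕ) = permEdge n σ (permEdge n τ e)
    rw [coe_permEdge, coe_permEdge, coe_permEdge, image_image]
    rfl

theorem coe_smul (σ : symmetricSubgroup n) (e : edgesN n) :
    ((σ • e : edgesN n) : Finset ℕ) = e.1.image σ :=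
  coe_permEdge σ e

end symmetricSubgroup

abbrev fixingSubgroupIcc (n k : ℕ) : Subgroup (symmetricSubgroup n) :=
  fixingSubgroup (symmetricSubgroup n) (↑(Icc 1 k) : Set ℕ)

theorem mem_fixingSubgroupIcc_iff {n k : ℕ} {σ : symmetricSubgroup n} :
    σ ∈ fixingSubgroupIcc n k ↔ ∀ x ∈ Icc 1 k, (σ : Perm ℕ) x = x := by
  simp [mem_fixingSubgroup_iff, Subgroup.smul_def, Perm.smul_def]

theorem pairOrbit_eq_orbit (n k : ℕ) (p : edgesN n × edgesN n) :
    pairOrbit n k p = orbit (fixingSubgroupIcc n k) p := by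
  ext q
  constructor
  · rintro ⟨σ, ⟨hk, hn⟩, rfl⟩
    exact ⟨⟨⟨σ, mem_symmetricSubgroup_iff.2 hn⟩, mem_fixingSubgroupIcc_iff.2 hk⟩, rfl⟩
  · rintro ⟨g, rfl⟩
    exact ⟨g, ⟨mem_fixingSubgroupIcc_iff.1 g.2, mem_symmetricSubgroup_iff.1 g.1.2⟩, rfl⟩

def orbitInvariant (n k : ℕ) (p : edgesN n × edgesN n) : Finset ℕ × Finset ℕ × ℕ :=
  (p.1.1 ∩ Icc 1 k, p.2.1 ∩ Icc 1 k, #((p.1.1 ∩ p.2.1) \ Icc 1 k))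

section orbitInvariant
variable {n k : ℕ}

theorem coe_fixingSubgroupIcc_smul (g : fixingSubgroupIcc n k) (e : edgesN n) :
    ((g • e : edgesN n) : Finset ℕ) = e.1.image ((g : symmetricSubgroup n) : Perm ℕ) :=
  symmetricSubgroup.coe_smul g.1 e

theorem orbitInvariant_smul (g : fixingSubgroupIcc n k) (p : edgesN n × edgesN n) :
    orbitInvariant n k (g • p) = orbitInvariant n k p := by
  obtain ⟨⟨σ, hσn⟩, hσK⟩ := g
  have hK : ∀ x ∈ Icc 1 k, σ x = x := mem_fixingSubgroupIcc_iff.1 hσK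
  simp only [orbitInvariant, Prod.smul_fst, Prod.smul_snd, coe_fixingSubgroupIcc_smul,
    image_perm_inter_of_forall_mem hK, ← image_inter _ _ σ.injective,
    image_perm_sdiff_of_forall_mem hK, card_image_of_injective _ σ.injective]

theorem exists_smul_eq_of_orbitInvariant_eq {p q : edgesN n × edgesN n}
    (h : orbitInvariant n k p = orbitInvariant n k q) :
    ∃ g : fixingSubgroupIcc n k, g • p = q := by
  obtain ⟨⟨e, he⟩, ⟨f, hf⟩⟩ := p
  obtain ⟨⟨e', he'⟩, ⟨f', hf'⟩⟩ := q
  simp only [orbitInvariant, Prod.mk.injEq] at h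
  obtain ⟨he_inter, hf_inter, hef⟩ := h
  set K := Icc 1 k
  set M := Icc 1 n \ K
  have hcard {s : Finset ℕ} (hs : s ∈ edgesN n) : #(M ∩ s) + #(s ∩ K) = 2 := by
    rw [sdiff_inter_of_subset (mem_edgesN.1 hs).1, card_sdiff_add_card_inter, (mem_edgesN.1 hs).2]
  have hoff {s s' : Finset ℕ} (hs : s ∈ edgesN n) (hs' : s' ∈ edgesN n) (hss : s ∩ K = s' ∩ K)
      {x : ℕ} (hx : x ∉ M) : x ∈ s' ↔ x ∈ s :=
    (mem_iff_mem_of_inter_eq_of_notMem_sdiff (mem_edgesN.1 hs).1 (mem_edgesN.1 hs').1 hss hx).symm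
  have hfibers := card_filter_mem_pair_eq (M := M) (s := e) (t := f) (s' := e') (t' := f')
    (by have := hcard he; have := hcard he'; rw [he_inter] at *; omega)
    (by have := hcard hf; have := hcard hf'; rw [hf_inter] at *; omega)
    (by rwa [sdiff_inter_of_subset (inter_subset_left.trans (mem_edgesN.1 he).1),
      sdiff_inter_of_subset (inter_subset_left.trans (mem_edgesN.1 he').1)])
  obtain ⟨σ, hσM, hσ⟩ := exists_perm_comp_eq_of_card_filter_eq hfibers
  have hσK : ∀ x ∈ K, σ x = x := fun x hx => hσM x fun hxM => (mem_sdiff.1 hxM).2 hx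
  have hσn : ∀ x ∉ Icc 1 n, σ x = x := fun x hx => hσM x fun hxM => hx (mem_sdiff.1 hxM).1
  refine ⟨⟨⟨σ, mem_symmetricSubgroup_iff.2 hσn⟩, mem_fixingSubgroupIcc_iff.2 hσK⟩,
    Prod.ext (Subtype.ext ?_) (Subtype.ext ?_)⟩ <;>
    refine (coe_fixingSubgroupIcc_smul _ _).trans (image_perm_eq_of_forall_mem_iff fun x => ?_) <;>
    by_cases hx : x ∈ M
  · simpa using congrArg Prod.fst (hσ x hx)
  · rw [hσM x hx]; exact hoff he he' he_inter hx
  · simpa using congrArg Prod.snd (hσ x hx)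
  · rw [hσM x hx]; exact hoff hf hf' hf_inter hx

theorem orbit_eq_iff_orbitInvariant_eq (p q : edgesN n × edgesN n) :
    orbit (fixingSubgroupIcc n k) p = orbit (fixingSubgroupIcc n k) q ↔
      orbitInvariant n k p = orbitInvariant n k q := by
  rw [orbit_eq_iff]
  constructor
  · rintro ⟨g, rfl⟩
    exact orbitInvariant_smul g q
  · exact fun h => exists_smul_eq_of_orbitInvariant_eq h.symm

end orbitInvariant

def orbitInvariants (k : ℕ) : Finset (Finset ℕ × Finset ℕ × ℕ) :=
  {x ∈ (Icc 1 k).powerset ×ˢ (Icc 1 k).powerset ×ˢ range 3 |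
    #x.1 + x.2.2 ≤ 2 ∧ #x.2.1 + x.2.2 ≤ 2}

section orbitInvariants
variable {n k : ℕ}

theorem orbitInvariant_mem_orbitInvariants (p : edgesN n × edgesN n) :
    orbitInvariant n k p ∈ orbitInvariants k := by
  obtain ⟨⟨e, he⟩, ⟨f, hf⟩⟩ := p
  have hle {s : Finset ℕ} (hs : s ∈ edgesN n) (t : Finset ℕ) :
      #(s ∩ Icc 1 k) + #((s ∩ t) \ Icc 1 k) ≤ 2 := by
    have hsplit := card_inter_add_card_sdiff s (Icc 1 k)
    have hsub := card_le_card (sdiff_subset_sdiff inter_subset_left le_rfl :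
      (s ∩ t) \ Icc 1 k ⊆ s \ Icc 1 k)
    rw [(mem_edgesN.1 hs).2] at hsplit
    omega
  simp only [orbitInvariants, orbitInvariant, mem_filter, mem_product, mem_powerset, mem_range]
  refine ⟨⟨inter_subset_right, inter_subset_right, by have := hle he f; omega⟩, hle he f, ?_⟩
  rw [inter_comm e f]
  exact hle hf e

theorem exists_orbitInvariant_eq (hn : k + 4 ≤ n) {x : Finset ℕ × Finset ℕ × ℕ}
    (hx : x ∈ orbitInvariants k) : ∃ p : edgesN n × edgesN n, orbitInvariant n k p = x := by
  obtain ⟨A, B, t⟩ := x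
  simp only [orbitInvariants, mem_filter, mem_product, mem_powerset, mem_range] at hx
  obtain ⟨⟨hA, hB, -⟩, hAt, hBt⟩ := hx
  have hdisj {lo : ℕ} (hi : ℕ) (hlo : k < lo) : Disjoint (Ico lo hi) (Icc 1 k) :=
    disjoint_left.2 fun x h h' => by simp only [mem_Ico, mem_Icc] at h h'; omega
  have hedge {C : Finset ℕ} {lo hi : ℕ} (hC : C ⊆ Icc 1 k) (hlo : k < lo) (hhi : hi ≤ n + 1)
      (hcard : #C + (hi - lo) = 2) : C ∪ Ico lo hi ∈ edgesN n := by
    rw [mem_edgesN, card_union_of_disjoint ((hdisj hi hlo).symm.mono_left hC), Nat.card_Ico]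
    refine ⟨union_subset (hC.trans (Icc_subset_Icc_right (by omega))) fun x hx => ?_, hcard⟩
    simp only [mem_Ico, mem_Icc] at hx ⊢
    omega
  -- Outside `[k]`, the two edges occupy runs in `[k + 1, k + 4]` overlapping in exactly `t` points.
  refine ⟨(⟨A ∪ Ico (k + 1) (k + 3 - #A), hedge hA (by omega) (by omega) (by omega)⟩,
    ⟨B ∪ Ico (k + 3 - #A - t) (k + 5 - #A - #B - t), hedge hB (by omega) (by omega) (by omega)⟩),
    ?_⟩
  simp only [orbitInvariant, Prod.mk.injEq]
  refine ⟨union_inter_of_subset_of_disjoint hA (hdisj _ (by omega)),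
    union_inter_of_subset_of_disjoint hB (hdisj _ (by omega)), ?_⟩
  rw [inter_sdiff_distrib, union_sdiff_of_subset_of_disjoint hA (hdisj _ (by omega)),
    union_sdiff_of_subset_of_disjoint hB (hdisj _ (by omega)), Ico_inter_Ico, Nat.card_Ico]
  omega

theorem range_orbitInvariant (hn : k + 4 ≤ n) :
    Set.range (orbitInvariant n k) = orbitInvariants k :=
  Set.ext fun _ => ⟨by rintro ⟨p, rfl⟩; exact orbitInvariant_mem_orbitInvariants p,
    exists_orbitInvariant_eq hn⟩

theorem card_orbitInvariants (k : ℕ) :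
    #(orbitInvariants k) = (k.choose 2 + k + 1) ^ 2 + (k + 1) ^ 2 + 1 := by
  let S (m : ℕ) := {A ∈ (Icc 1 k).powerset | #A ≤ m}
  have hfiber (t : ℕ) (ht : t ∈ range 3) :
      {x ∈ orbitInvariants k | x.2.2 = t} = S (2 - t) ×ˢ S (2 - t) ×ˢ {t} := by
    rw [mem_range] at ht
    ext ⟨A, B, u⟩
    simp only [S, orbitInvariants, mem_filter, mem_product, mem_powerset, mem_range,
      mem_singleton]
    constructor
    · rintro ⟨⟨⟨hA, hB, -⟩, hAu, hBu⟩, rfl⟩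
      exact ⟨⟨hA, by omega⟩, ⟨hB, by omega⟩, rfl⟩
    · rintro ⟨⟨hA, hAu⟩, ⟨hB, hBu⟩, rfl⟩
      exact ⟨⟨⟨hA, hB, ht⟩, by omega, by omega⟩, rfl⟩
  rw [card_eq_sum_card_fiberwise (f := fun x => x.2.2) (s := orbitInvariants k) (t := range 3)
    fun x hx => (mem_product.1 (mem_product.1 (mem_filter.1 hx).1).2).2,
    sum_congr rfl fun t ht => by rw [hfiber t ht, card_product, card_product, card_singleton]]
  have hS (m : ℕ) : #(S m) = ∑ j ∈ range (m + 1), k.choose j := by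
    rw [card_filter_powerset_card_le, Nat.card_Icc, Nat.add_sub_cancel]
  norm_num [sum_range_succ, hS]
  ring

end orbitInvariants

/-- **Orbit count.** For `n ≥ k + 4`, the number of orbits of the diagonal action of
`S_{n-k}` on `E × E` equals `3 + 4k + 2k² + C(k,2)(C(k,2) + 2k + 2)`, which equals
`(C(k,2)+k+1)² + (k+1)² + 1²`. -/
theorem card_pairOrbits (k n : ℕ) (hn : k + 4 ≤ n) :
    Nat.card ↥(Set.range (pairOrbit n k))
        = 3 + 4 * k + 2 * k ^ 2 + Nat.choose k 2 * (Nat.choose k 2 + 2 * k + 2)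
      ∧ 3 + 4 * k + 2 * k ^ 2 + Nat.choose k 2 * (Nat.choose k 2 + 2 * k + 2)
        = (Nat.choose k 2 + k + 1) ^ 2 + (k + 1) ^ 2 + 1 ^ 2 := by
  have hcard : Nat.card (Set.range (pairOrbit n k)) =
      (k.choose 2 + k + 1) ^ 2 + (k + 1) ^ 2 + 1 := by
    rw [funext (pairOrbit_eq_orbit n k),
      Nat.card_range_eq_of_forall_eq_iff orbit_eq_iff_orbitInvariant_eq, range_orbitInvariant hn,
      Nat.card_coe_set_eq, Set.ncard_coe_finset, card_orbitInvariants]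
  exact ⟨by rw [hcard]; ring, by ring⟩
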